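/- Let X and Y be real Banach spaces, 1 ≤ p < ∞, and Z = X ⊕_p Y (the product X × Y with norm ‖(x,y)‖ = (‖x‖^p + ‖y‖^p)^{1/p}). Then Z has the Ball Dentable Property (BDP) if and only if X has BDP or Y has BDP. -/

import Mathlib

/-!
Given a slice `S(B_X, f, α)` of small diameter, `f ∘ fst` has a small slice in `B_Z`: on it
`‖z.fst‖ > 1 - α`, so Bernoulli's inequality gives `‖z.snd‖ ^ p ≤ p (1 - ‖z.fst‖) < p α`.

Conversely, let `S(B_Z, F, α)` be small and `z = (x, y)` a point of `B_Z` with `F z > 1 - α / 2`.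
One of `F (x, 0)`, `F (0, y)` is at least `F z / 2`, say the first. Since the `ℓ^p` norm is
monotone in each coordinate, `x' ↦ (‖x‖ x', y)` maps a slice of `B_X` by the normalised
restriction of `F` into `S(B_Z, F, α)`, multiplying distances by `‖x‖ > 1 / 4`. The other case
is the same one after the isometry `X ⊕_p Y ≅ Y ⊕_p X`.
-/

open Metric Topology Pointwise ENNReal

noncomputable section

/-- The slice `S(B_X, f, α) = {x ∈ B_X : f x > 1 - α}` of the closed unit ball of `X`
determined by the functional `f` and `α`. -/
def ballSlice (X : Type*) [NormedAddCommGroup X] [NormedSpace ℝ X]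
    (f : X →L[ℝ] ℝ) (α : ℝ) : Set X :=
  {x | x ∈ closedBall (0 : X) 1 ∧ 1 - α < f x}

/-- `X` has the Ball Dentable Property: the closed unit ball has slices (determined by
norm-one functionals) of arbitrarily small diameter. -/
def BDP (X : Type*) [NormedAddCommGroup X] [NormedSpace ℝ X] : Prop :=
  ∀ ε > (0 : ℝ), ∃ f : X →L[ℝ] ℝ, ‖f‖ = 1 ∧ ∃ α > (0 : ℝ), diam (ballSlice X f α) < ε

/-- The weak topology on `X`: the coarsest topology making all continuous linear
functionals continuous. -/
def weakTop (X : Type*) [NormedAddCommGroup X] [NormedSpace ℝ X] : TopologicalSpace X :=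
  ⨅ f : X →L[ℝ] ℝ, TopologicalSpace.induced f inferInstance

/-- `X` has the Ball Huskable Property: the closed unit ball has nonempty relatively
weakly open subsets of arbitrarily small diameter. -/
def BHP (X : Type*) [NormedAddCommGroup X] [NormedSpace ℝ X] : Prop :=
  ∀ ε > (0 : ℝ), ∃ V : Set X, IsOpen[weakTop X] V ∧
    (V ∩ closedBall (0 : X) 1).Nonempty ∧ diam (V ∩ closedBall (0 : X) 1) < ε

/-- `X` has the Ball Small Combination of Slices Property: there are finite convex
combinations of slices of the closed unit ball of arbitrarily small diameter. -/
def BSCSP (X : Type*) [NormedAddCommGroup X] [NormedSpace ℝ X] : Prop :=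
  ∀ ε > (0 : ℝ), ∃ (n : ℕ) (f : Fin n → X →L[ℝ] ℝ) (α lam : Fin n → ℝ),
    (∀ i, ‖f i‖ = 1) ∧ (∀ i, 0 < α i) ∧ (∀ i, 0 ≤ lam i) ∧ (∑ i, lam i = 1) ∧
    diam (∑ i, lam i • ballSlice X (f i) (α i)) < ε

/-- The weak* ballSlice `{g ∈ B_{E*} : g e > 1 - α}` of the closed unit ball of the dual of `E`
determined by `e : E` and `α`. -/
def wstarSlice (E : Type*) [NormedAddCommGroup E] [NormedSpace ℝ E]
    (e : E) (α : ℝ) : Set (E →L[ℝ] ℝ) :=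
  {g | g ∈ closedBall (0 : E →L[ℝ] ℝ) 1 ∧ 1 - α < g e}

/-- The dual of `E` has the w*-Ball Dentable Property: the closed unit ball of `E*` has
weak* slices (determined by norm-one elements of `E`) of arbitrarily small diameter. -/
def wstarBDP (E : Type*) [NormedAddCommGroup E] [NormedSpace ℝ E] : Prop :=
  ∀ ε > (0 : ℝ), ∃ e : E, ‖e‖ = 1 ∧ ∃ α > (0 : ℝ), diam (wstarSlice E e α) < ε

/-- The weak* topology `σ(E*, E)` on the dual of `E`. -/
def wstarTop (E : Type*) [NormedAddCommGroup E] [NormedSpace ℝ E] :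
    TopologicalSpace (E →L[ℝ] ℝ) :=
  ⨅ e : E, TopologicalSpace.induced (fun g : E →L[ℝ] ℝ => g e) inferInstance

/-- The dual of `E` has the w*-Ball Huskable Property: the closed unit ball of `E*` has
nonempty relatively weak*-open subsets of arbitrarily small diameter. -/
def wstarBHP (E : Type*) [NormedAddCommGroup E] [NormedSpace ℝ E] : Prop :=
  ∀ ε > (0 : ℝ), ∃ V : Set (E →L[ℝ] ℝ), IsOpen[wstarTop E] V ∧
    (V ∩ closedBall (0 : E →L[ℝ] ℝ) 1).Nonempty ∧
    diam (V ∩ closedBall (0 : E →L[ℝ] ℝ) 1) < ε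

/-- The dual of `E` has the w*-Ball Small Combination of Slices Property: there are finite
convex combinations of weak* slices of the closed unit ball of `E*` of arbitrarily small
diameter. -/
def wstarBSCSP (E : Type*) [NormedAddCommGroup E] [NormedSpace ℝ E] : Prop :=
  ∀ ε > (0 : ℝ), ∃ (n : ℕ) (e : Fin n → E) (α lam : Fin n → ℝ),
    (∀ i, ‖e i‖ = 1) ∧ (∀ i, 0 < α i) ∧ (∀ i, 0 ≤ lam i) ∧ (∑ i, lam i = 1) ∧
    diam (∑ i, lam i • wstarSlice E (e i) (α i)) < ε

open WithLp

section Slices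

variable {E F : Type*} [NormedAddCommGroup E] [NormedSpace ℝ E]
  [NormedAddCommGroup F] [NormedSpace ℝ F]

/-- Chosen so that `BDP E` is, by definition, `∀ ε > 0, HasSmallSlice E ε`. -/
def HasSmallSlice (E : Type*) [NormedAddCommGroup E] [NormedSpace ℝ E] (ε : ℝ) : Prop :=
  ∃ f : E →L[ℝ] ℝ, ‖f‖ = 1 ∧ ∃ α > (0 : ℝ), diam (ballSlice E f α) < ε

lemma hasSmallSlice_monotone : Monotone (HasSmallSlice E) :=
  fun _ _ hε ⟨f, hf, α, hα, hd⟩ => ⟨f, hf, α, hα, hd.trans_le hε⟩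

lemma isBounded_ballSlice (f : E →L[ℝ] ℝ) (α : ℝ) : Bornology.IsBounded (ballSlice E f α) :=
  isBounded_closedBall.subset fun _ hx => hx.1

lemma ballSlice_mono (f : E →L[ℝ] ℝ) {α β : ℝ} (h : α ≤ β) :
    ballSlice E f α ⊆ ballSlice E f β :=
  fun _ ⟨hx, hfx⟩ => ⟨hx, by linarith⟩

lemma ballSlice_comp_linearIsometryEquiv (e : E ≃ₗᵢ[ℝ] F) (f : F →L[ℝ] ℝ) (α : ℝ) :
    ballSlice E (f.comp (e : E →L[ℝ] F)) α = e ⁻¹' ballSlice F f α := by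
  ext x
  simp [ballSlice]

lemma diam_ballSlice_comp_linearIsometryEquiv (e : E ≃ₗᵢ[ℝ] F) (f : F →L[ℝ] ℝ) (α : ℝ) :
    diam (ballSlice E (f.comp (e : E →L[ℝ] F)) α) = diam (ballSlice F f α) := by
  rw [ballSlice_comp_linearIsometryEquiv]
  exact e.toIsometryEquiv.diam_preimage _

lemma HasSmallSlice.of_linearIsometryEquiv (e : E ≃ₗᵢ[ℝ] F) {ε : ℝ} (h : HasSmallSlice F ε) :
    HasSmallSlice E ε := by
  obtain ⟨f, hf, α, hα, hd⟩ := h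
  exact ⟨f.comp (e : E →L[ℝ] F), by rw [f.opNorm_comp_linearIsometryEquiv, hf], α, hα,
    by rwa [diam_ballSlice_comp_linearIsometryEquiv]⟩

lemma BDP.of_linearIsometryEquiv (e : E ≃ₗᵢ[ℝ] F) (h : BDP F) : BDP E :=
  fun ε hε => HasSmallSlice.of_linearIsometryEquiv e (h ε hε)

lemma ContinuousLinearMap.exists_norm_le_one_lt_apply (f : E →L[ℝ] ℝ) (hf : ‖f‖ = 1) {c : ℝ}
    (hc : c < 1) : ∃ z, ‖z‖ ≤ 1 ∧ c < f z := by
  obtain ⟨z, hz, hcz⟩ := f.exists_lt_apply_of_lt_opNorm (hf ▸ hc)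
  rcases le_or_gt 0 (f z) with h | h
  · exact ⟨z, hz.le, by rwa [Real.norm_of_nonneg h] at hcz⟩
  · exact ⟨-z, by rw [norm_neg]; exact hz.le, by rwa [Real.norm_of_nonpos h.le, ← map_neg] at hcz⟩

end Slices

lemma Metric.diam_le_div_of_mapsTo {α β : Type*} [PseudoMetricSpace α] [PseudoMetricSpace β]
    {s : Set α} {t : Set β} {φ : α → β} (hst : Set.MapsTo φ s t) (ht : Bornology.IsBounded t)
    {c : ℝ} (hc : 0 < c) (hφ : ∀ a b, dist (φ a) (φ b) = c * dist a b) :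
    diam s ≤ diam t / c := by
  refine diam_le_of_forall_dist_le (div_nonneg diam_nonneg hc.le) fun a ha b hb => ?_
  rw [le_div_iff₀' hc, ← hφ]
  exact dist_le_diam_of_mem ht (hst ha) (hst hb)

lemma forall_or_forall_of_monotone {P Q : ℝ → Prop} (hP : Monotone P) (hQ : Monotone Q)
    (h : ∀ ε > 0, P ε ∨ Q ε) : (∀ ε > 0, P ε) ∨ ∀ ε > 0, Q ε := by
  by_contra! ⟨⟨ε, hε, hPε⟩, ⟨δ, hδ, hQδ⟩⟩
  rcases h (min ε δ) (lt_min hε hδ) with hP' | hQ'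
  · exact hPε (hP (min_le_left ε δ) hP')
  · exact hQδ (hQ (min_le_right ε δ) hQ')

section LpProdNorm

variable {X Y : Type*} [SeminormedAddCommGroup X] [SeminormedAddCommGroup Y]
  {p : ℝ≥0∞} [Fact (1 ≤ p)]

lemma WithLp.prod_norm_le_norm_fst_add_norm_snd (z : WithLp p (X × Y)) :
    ‖z‖ ≤ ‖z.fst‖ + ‖z.snd‖ :=
  calc ‖z‖ = ‖toLp p (z.fst, (0 : Y)) + toLp p ((0 : X), z.snd)‖ := by
        rw [← toLp_add, Prod.mk_add_mk, add_zero, zero_add]; rfl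
    _ ≤ ‖toLp p (z.fst, (0 : Y))‖ + ‖toLp p ((0 : X), z.snd)‖ := norm_add_le _ _
    _ = ‖z.fst‖ + ‖z.snd‖ := by rw [norm_toLp_fst, norm_toLp_snd]

lemma WithLp.prod_dist_le_dist_fst_add_dist_snd (z w : WithLp p (X × Y)) :
    dist z w ≤ dist z.fst w.fst + dist z.snd w.snd := by
  simpa only [dist_eq_norm, sub_fst, sub_snd] using prod_norm_le_norm_fst_add_norm_snd (z - w)

lemma WithLp.prod_norm_toLp_le_of_norm_fst_le {x x' : X} (h : ‖x'‖ ≤ ‖x‖) (y : Y) :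
    ‖toLp p (x', y)‖ ≤ ‖toLp p (x, y)‖ := by
  rcases eq_or_ne p ∞ with rfl | hp
  · simp only [prod_norm_eq_sup, toLp_fst, toLp_snd]
    exact sup_le_sup_right h _
  · have hq : 0 < p.toReal := toReal_pos (zero_lt_one.trans_le Fact.out).ne' hp
    simp only [prod_norm_eq_add hq, toLp_fst, toLp_snd]
    gcongr

lemma WithLp.prod_norm_snd_rpow_le (hp : p ≠ ∞) {z : WithLp p (X × Y)} (hz : ‖z‖ ≤ 1) :
    ‖z.snd‖ ^ p.toReal ≤ p.toReal * (1 - ‖z.fst‖) := by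
  have hq1 : 1 ≤ p.toReal := by simpa using toReal_mono hp (Fact.out : 1 ≤ p)
  have hq : 0 < p.toReal := by linarith
  have hsum : ‖z.fst‖ ^ p.toReal + ‖z.snd‖ ^ p.toReal ≤ 1 := by
    have := Real.rpow_le_one (norm_nonneg z) hz hq.le
    rwa [prod_norm_eq_add hq, ← Real.rpow_mul (by positivity), one_div_mul_cancel hq.ne',
      Real.rpow_one] at this
  have hbernoulli : 1 + p.toReal * (‖z.fst‖ - 1) ≤ ‖z.fst‖ ^ p.toReal := by
    simpa using
      one_add_mul_self_le_rpow_one_add (s := ‖z.fst‖ - 1) (by linarith [norm_nonneg z.fst]) hq1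
  linarith

end LpProdNorm

section LpProdSlices

variable {p : ℝ≥0∞} {X Y : Type*} [NormedAddCommGroup X] [NormedSpace ℝ X]
  [NormedAddCommGroup Y] [NormedSpace ℝ Y]

variable (p X Y) in
def WithLp.inlL : X →L[ℝ] WithLp p (X × Y) :=
  (prodContinuousLinearEquiv p ℝ X Y).symm.toContinuousLinearMap.comp
    (ContinuousLinearMap.inl ℝ X Y)

@[simp]
lemma WithLp.inlL_apply (x : X) : inlL p X Y x = toLp p (x, 0) := rfl

variable [Fact (1 ≤ p)]

lemma WithLp.norm_comp_fstL (f : X →L[ℝ] ℝ) : ‖f.comp (fstL p ℝ X Y)‖ = ‖f‖ := by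
  refine le_antisymm (ContinuousLinearMap.opNorm_le_bound _ (norm_nonneg f) fun z => ?_)
    (f.opNorm_le_bound (norm_nonneg _) fun x => ?_)
  · exact (f.le_opNorm _).trans (mul_le_mul_of_nonneg_left (norm_fst_le _ z) (norm_nonneg f))
  · simpa using (f.comp (fstL p ℝ X Y)).le_opNorm (toLp p (x, (0 : Y)))

lemma WithLp.norm_comp_inlL_le (F : WithLp p (X × Y) →L[ℝ] ℝ) :
    ‖F.comp (inlL p X Y)‖ ≤ ‖F‖ :=
  ContinuousLinearMap.opNorm_le_bound _ (norm_nonneg F) fun x => by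
    simpa using F.le_opNorm (toLp p (x, (0 : Y)))

lemma WithLp.mem_ballSlice_comp_fstL (hp : p ≠ ∞) {f : X →L[ℝ] ℝ} (hf : ‖f‖ ≤ 1) {α : ℝ}
    {z : WithLp p (X × Y)} (hz : z ∈ ballSlice (WithLp p (X × Y)) (f.comp (fstL p ℝ X Y)) α) :
    z.fst ∈ ballSlice X f α ∧ ‖z.snd‖ ^ p.toReal ≤ p.toReal * α := by
  obtain ⟨hz, hfz⟩ := hz
  rw [mem_closedBall_zero_iff] at hz
  have hfst : f z.fst ≤ ‖z.fst‖ :=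
    (le_abs_self _).trans ((f.le_opNorm _).trans (mul_le_of_le_one_left (norm_nonneg _) hf))
  refine ⟨⟨mem_closedBall_zero_iff.2 ((norm_fst_le _ z).trans hz), hfz⟩, ?_⟩
  calc ‖z.snd‖ ^ p.toReal ≤ p.toReal * (1 - ‖z.fst‖) := prod_norm_snd_rpow_le hp hz
    _ ≤ p.toReal * α := by
        gcongr
        change 1 - α < f z.fst at hfz
        linarith

lemma HasSmallSlice.withLp_prod_left (hp : p ≠ ∞) {ε : ℝ} (hε : 0 < ε)
    (h : HasSmallSlice X (ε / 2)) : HasSmallSlice (WithLp p (X × Y)) ε := by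
  obtain ⟨f, hf, α₀, hα₀, hd⟩ := h
  have hq : 0 < p.toReal := toReal_pos (zero_lt_one.trans_le Fact.out).ne' hp
  -- `α` is small enough to force `‖z.snd‖ ≤ ε / 4` on the slice
  set α := min α₀ ((ε / 4) ^ p.toReal / p.toReal)
  refine ⟨f.comp (fstL p ℝ X Y), by rw [norm_comp_fstL, hf], α, by positivity, ?_⟩
  have hslice : ∀ z ∈ ballSlice _ (f.comp (fstL p ℝ X Y)) α,
      z.fst ∈ ballSlice X f α₀ ∧ ‖z.snd‖ ≤ ε / 4 := by
    intro z hz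
    obtain ⟨hfst, hsnd⟩ := mem_ballSlice_comp_fstL hp hf.le hz
    refine ⟨ballSlice_mono f (min_le_left _ _) hfst, ?_⟩
    refine (Real.rpow_le_rpow_iff (norm_nonneg _) (by positivity) hq).1 (hsnd.trans ?_)
    calc p.toReal * α ≤ p.toReal * ((ε / 4) ^ p.toReal / p.toReal) := by
          gcongr; exact min_le_right _ _
      _ = (ε / 4) ^ p.toReal := by field_simp
  calc diam (ballSlice _ (f.comp (fstL p ℝ X Y)) α) ≤ diam (ballSlice X f α₀) + ε / 2 := by
        refine diam_le_of_forall_dist_le (by positivity) fun z hz w hw => ?_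
        obtain ⟨hz₁, hz₂⟩ := hslice z hz
        obtain ⟨hw₁, hw₂⟩ := hslice w hw
        calc dist z w ≤ dist z.fst w.fst + dist z.snd w.snd :=
              prod_dist_le_dist_fst_add_dist_snd z w
          _ ≤ diam (ballSlice X f α₀) + (‖z.snd‖ + ‖w.snd‖) := by
              gcongr
              · exact dist_le_diam_of_mem (isBounded_ballSlice f α₀) hz₁ hw₁
              · exact dist_le_norm_add_norm _ _
          _ ≤ diam (ballSlice X f α₀) + ε / 2 := by linarith
    _ < ε := by linarith

lemma BDP.withLp_prod_left (hp : p ≠ ∞) (h : BDP X) : BDP (WithLp p (X × Y)) :=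
  fun ε hε => HasSmallSlice.withLp_prod_left hp hε (h (ε / 2) (by positivity))

lemma BDP.withLp_prod_right (hp : p ≠ ∞) (h : BDP Y) : BDP (WithLp p (X × Y)) :=
  (h.withLp_prod_left (Y := X) hp).of_linearIsometryEquiv
    (LinearIsometryEquiv.withLpProdComm p ℝ X Y)

lemma HasSmallSlice.of_withLp_prod_slice {F : WithLp p (X × Y) →L[ℝ] ℝ} (hF : ‖F‖ ≤ 1)
    {α ε : ℝ} (hα : 0 < α) (hα1 : α ≤ 1) (hd : diam (ballSlice _ F α) < ε / 4)
    {z : WithLp p (X × Y)} (hz : ‖z‖ ≤ 1) (hFz : 1 - α / 2 < F z)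
    (hle : F (toLp p (0, z.snd)) ≤ F (toLp p (z.fst, 0))) : HasSmallSlice X ε := by
  set g := F.comp (inlL p X Y)
  have hg : ‖g‖ ≤ 1 := (norm_comp_inlL_le F).trans hF
  have hsplit : F z = g z.fst + F (toLp p (0, z.snd)) := by
    rw [ContinuousLinearMap.comp_apply, inlL_apply, ← map_add, ← toLp_add, Prod.mk_add_mk,
      add_zero, zero_add]
    rfl
  have hgz : g z.fst ≤ ‖g‖ * ‖z.fst‖ := (le_abs_self _).trans (g.le_opNorm _)
  have hgz1 : g z.fst ≤ 1 :=
    hgz.trans (mul_le_one₀ hg (norm_nonneg _) ((norm_fst_le _ z).trans hz))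
  have hgz_pos : 1 / 4 < g z.fst := by change _ ≤ g z.fst at hle; linarith
  have hzfst : 1 / 4 < ‖z.fst‖ := by nlinarith [norm_nonneg g, norm_nonneg z.fst]
  have hg_pos : 0 < ‖g‖ := by nlinarith [norm_nonneg g, norm_nonneg z.fst]
  refine ⟨‖g‖⁻¹ • g, norm_smul_inv_norm (norm_pos_iff.1 hg_pos), α / 2, by positivity, ?_⟩
  have hmaps : Set.MapsTo (fun x => toLp p (‖z.fst‖ • x, z.snd))
      (ballSlice X (‖g‖⁻¹ • g) (α / 2)) (ballSlice _ F α) := by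
    rintro x ⟨hx, hgx⟩
    rw [mem_closedBall_zero_iff] at hx
    change 1 - α / 2 < ‖g‖⁻¹ * g x at hgx
    refine ⟨mem_closedBall_zero_iff.2 ((prod_norm_toLp_le_of_norm_fst_le ?_ _).trans hz), ?_⟩
    · rw [norm_smul, norm_norm]
      exact mul_le_of_le_one_right (norm_nonneg _) hx
    · have hgx' : ‖g‖ * (1 - α / 2) < g x := by
        rwa [← lt_inv_mul_iff₀ hg_pos]
      have hF : F (toLp p (‖z.fst‖ • x, z.snd)) = ‖z.fst‖ * g x + F (toLp p (0, z.snd)) := by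
        rw [← smul_eq_mul, ← map_smul, ContinuousLinearMap.comp_apply, inlL_apply, ← map_add,
          ← toLp_add, Prod.mk_add_mk, add_zero, zero_add]
      rw [hF]
      nlinarith [norm_nonneg z.fst]
  have hdist : ∀ a b : X, dist (toLp p (‖z.fst‖ • a, z.snd)) (toLp p (‖z.fst‖ • b, z.snd))
      = ‖z.fst‖ * dist a b := by
    intro a b
    rw [dist_eq_norm, ← toLp_sub, Prod.mk_sub_mk, sub_self, ← smul_sub, norm_toLp_fst, norm_smul,
      norm_norm, dist_eq_norm]
  calc diam (ballSlice X (‖g‖⁻¹ • g) (α / 2)) ≤ diam (ballSlice _ F α) / ‖z.fst‖ :=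
        diam_le_div_of_mapsTo hmaps (isBounded_ballSlice F α) (by linarith) hdist
    _ ≤ diam (ballSlice _ F α) / (1 / 4) := by gcongr
    _ < ε := by linarith

lemma HasSmallSlice.fst_or_snd_of_withLp_prod {ε : ℝ}
    (h : HasSmallSlice (WithLp p (X × Y)) (ε / 4)) :
    HasSmallSlice X ε ∨ HasSmallSlice Y ε := by
  obtain ⟨F, hF, α₀, hα₀, hd₀⟩ := h
  set α := min α₀ 1
  have hα : 0 < α := by positivity
  have hd : diam (ballSlice _ F α) < ε / 4 :=
    (diam_mono (ballSlice_mono F (min_le_left _ _)) (isBounded_ballSlice F α₀)).trans_lt hd₀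
  obtain ⟨z, hz, hFz⟩ := F.exists_norm_le_one_lt_apply hF (c := 1 - α / 2) (by linarith)
  rcases le_total (F (toLp p (0, z.snd))) (F (toLp p (z.fst, 0))) with hle | hle
  · exact .inl (.of_withLp_prod_slice hF.le hα (min_le_right _ _) hd hz hFz hle)
  · let e := LinearIsometryEquiv.withLpProdComm p ℝ Y X
    refine .inr (.of_withLp_prod_slice (F := F.comp (e : _ →L[ℝ] _)) (z := e.symm z) ?_ hα
      (min_le_right _ _) ?_ ?_ ?_ ?_)
    · rw [F.opNorm_comp_linearIsometryEquiv, hF]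
    · rwa [diam_ballSlice_comp_linearIsometryEquiv]
    · rwa [LinearIsometryEquiv.norm_map]
    · simpa using hFz
    · simpa [e] using hle

end LpProdSlices

theorem statement4_general (X Y : Type*) [NormedAddCommGroup X] [NormedSpace ℝ X]
    [NormedAddCommGroup Y] [NormedSpace ℝ Y]
    (p : ℝ≥0∞) [Fact (1 ≤ p)] (hp : p ≠ ∞) :
    BDP (WithLp p (X × Y)) ↔ BDP X ∨ BDP Y := by
  constructor
  · intro hZ
    exact forall_or_forall_of_monotone hasSmallSlice_monotone hasSmallSlice_monotone
      fun ε hε => HasSmallSlice.fst_or_snd_of_withLp_prod (hZ (ε / 4) (by positivity))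
  · rintro (hX | hY)
    · exact hX.withLp_prod_left hp
    · exact hY.withLp_prod_right hp

/-- For `Z = X ⊕_p Y` (`1 ≤ p < ∞`), `Z` has `BDP` iff `X` or `Y` has `BDP`. -/
theorem statement4 (X Y : Type*) [NormedAddCommGroup X] [NormedSpace ℝ X] [CompleteSpace X]
    [NormedAddCommGroup Y] [NormedSpace ℝ Y] [CompleteSpace Y]
    (p : ℝ≥0∞) [Fact (1 ≤ p)] (hp : p ≠ ∞) :
    BDP (WithLp p (X × Y)) ↔ BDP X ∨ BDP Y :=
  statement4_general X Y p hp
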